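/- For m ≥ 1 and 0 < r₁ < ⋯ < r_m, let φ_m : ℝ → ℝ be defined by φ₁(s) = max(s, log r₁) and φ_m(s) = (1/2)φ_{m−1}(s) for s ≤ log r_m, φ_m(s) = s + (1/2)φ_{m−1}(log r_m) − log r_m for s > log r_m. Then each φ_m is convex, nondecreasing, piecewise affine with slopes in {0, 2^{-(m-1)}, 2^{-(m-2)}, …, 1/2, 1}, and the set of points where φ_m is not affine is exactly {log r₁, …, log r_m}. -/

import Mathlib

/-! Writing `c = ψ(L)/2 - L`, one step `φ = (ψ/2 below L, s + c above L)` of the recursion equals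
`max (ψ/2) (s + c)` as soon as `ψ t - ψ s ≤ t - s` for `s ≤ t`, so it preserves convexity,
monotonicity and that bound. Below `L` the germ of `φ` is that of `ψ/2` (slopes halve, kinks
persist), above `L` it has slope `1`, and at `L` it has a kink: slope `1` on the right but at most
`1/2` on the left. Since `φ₁` is the step from the constant `2 log r₁`, induction on `m` gives the
theorem. -/

open Real Set Classical

noncomputable section

def AffineAt (φ : ℝ → ℝ) (s : ℝ) : Prop :=
  ∃ ε > (0:ℝ), ∃ a b : ℝ, ∀ t : ℝ, |t - s| < ε → φ t = a * t + b

def AffineAtSlope (φ : ℝ → ℝ) (s a : ℝ) : Prop :=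
  ∃ ε > (0:ℝ), ∃ b : ℝ, ∀ t : ℝ, |t - s| < ε → φ t = a * t + b

open Filter Topology

section AffineGerm

variable {f g : ℝ → ℝ} {s a : ℝ}

theorem affineAtSlope_iff_eventually :
    AffineAtSlope f s a ↔ ∃ b, ∀ᶠ t in 𝓝 s, f t = a * t + b := by
  simp only [AffineAtSlope, Metric.eventually_nhds_iff, Real.dist_eq]
  constructor
  · rintro ⟨ε, hε, b, hb⟩
    exact ⟨b, ε, hε, fun t ht => hb t ht⟩
  · rintro ⟨b, ε, hε, hb⟩
    exact ⟨ε, hε, b, fun t ht => hb ht⟩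

theorem affineAt_iff_exists_affineAtSlope : AffineAt f s ↔ ∃ a, AffineAtSlope f s a := by
  constructor
  · rintro ⟨ε, hε, a, b, h⟩
    exact ⟨a, ε, hε, b, h⟩
  · rintro ⟨a, ε, hε, b, h⟩
    exact ⟨ε, hε, a, b, h⟩

theorem AffineAtSlope.congr (h : AffineAtSlope f s a) (hfg : f =ᶠ[𝓝 s] g) :
    AffineAtSlope g s a := by
  obtain ⟨b, hb⟩ := affineAtSlope_iff_eventually.1 h
  exact affineAtSlope_iff_eventually.2 ⟨b, hfg.symm.trans hb⟩

theorem affineAt_congr (hfg : f =ᶠ[𝓝 s] g) : AffineAt f s ↔ AffineAt g s := by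
  simp only [affineAt_iff_exists_affineAtSlope]
  exact ⟨fun ⟨a, h⟩ => ⟨a, h.congr hfg⟩, fun ⟨a, h⟩ => ⟨a, h.congr hfg.symm⟩⟩

theorem AffineAtSlope.const_mul (h : AffineAtSlope f s a) (c : ℝ) :
    AffineAtSlope (fun t => c * f t) s (c * a) := by
  obtain ⟨b, hb⟩ := affineAtSlope_iff_eventually.1 h
  exact affineAtSlope_iff_eventually.2 ⟨c * b, hb.mono fun t ht => by rw [ht]; ring⟩

theorem affineAt_const_mul_iff {c : ℝ} (hc : c ≠ 0) :
    AffineAt (fun t => c * f t) s ↔ AffineAt f s := by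
  simp only [affineAt_iff_exists_affineAtSlope]
  refine ⟨fun ⟨a, h⟩ => ⟨c⁻¹ * a, (h.const_mul c⁻¹).congr ?_⟩, fun ⟨a, h⟩ => ⟨c * a, h.const_mul c⟩⟩
  exact Eventually.of_forall fun t => inv_mul_cancel_left₀ hc (f t)

theorem AffineAtSlope.eq_of_eventually_nhdsGE {a' b' : ℝ} (h : AffineAtSlope f s a)
    (h' : ∀ᶠ t in 𝓝[≥] s, f t = a' * t + b') : a = a' := by
  obtain ⟨b, hb⟩ := affineAtSlope_iff_eventually.1 h
  have hs : a * s + b = a' * s + b' := by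
    rw [← hb.self_of_nhds, ← h'.self_of_nhdsWithin self_mem_Ici]
  obtain ⟨t, ⟨hbt, h't⟩, hst⟩ := (((hb.filter_mono nhdsWithin_le_nhds).and
    (nhdsWithin_mono s Ioi_subset_Ici_self h')).and self_mem_nhdsWithin).exists
  have hprod : (a - a') * (t - s) = 0 := by linear_combination hbt.symm.trans h't - hs
  rcases mul_eq_zero.1 hprod with ha | ht
  · linarith
  · exact absurd (sub_eq_zero.1 ht) (ne_of_gt hst)

end AffineGerm

section Step

def logProfileStep (ψ : ℝ → ℝ) (L s : ℝ) : ℝ :=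
  if s ≤ L then 1 / 2 * ψ s else s + 1 / 2 * ψ L - L

variable {ψ : ℝ → ℝ} {L s a : ℝ}

theorem logProfileStep_eq_max (hψ : ∀ s t, s ≤ t → ψ t - ψ s ≤ t - s) (s : ℝ) :
    logProfileStep ψ L s = max (1 / 2 * ψ s) (s + (1 / 2 * ψ L - L)) := by
  rw [logProfileStep]
  split_ifs with hs
  · rw [max_eq_left (by linarith [hψ s L hs])]
  · rw [max_eq_right (by linarith [hψ L s (le_of_not_ge hs)])]
    ring

theorem logProfileStep_of_le (hs : L ≤ s) :
    logProfileStep ψ L s = 1 * s + (1 / 2 * ψ L - L) := by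
  rw [logProfileStep]
  split_ifs with h
  · rw [le_antisymm h hs]
    ring
  · ring

theorem logProfileStep_eventuallyEq_of_lt (hs : s < L) :
    logProfileStep ψ L =ᶠ[𝓝 s] fun t => 1 / 2 * ψ t :=
  eventually_of_mem (Iio_mem_nhds hs) fun _ ht => if_pos (le_of_lt ht)

theorem monotone_logProfileStep (hψ : ∀ s t, s ≤ t → ψ t - ψ s ≤ t - s) (hψm : Monotone ψ) :
    Monotone (logProfileStep ψ L) := by
  intro s t hst
  rw [logProfileStep_eq_max hψ, logProfileStep_eq_max hψ]
  exact max_le_max (by linarith [hψm hst]) (by linarith)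

theorem convexOn_logProfileStep (hψ : ∀ s t, s ≤ t → ψ t - ψ s ≤ t - s)
    (hψc : ConvexOn ℝ univ ψ) : ConvexOn ℝ univ (logProfileStep ψ L) := by
  have hmax : logProfileStep ψ L =
      (fun s => (1 / 2 : ℝ) • ψ s) ⊔ (id + fun _ => 1 / 2 * ψ L - L) := by
    funext s
    simp only [logProfileStep_eq_max hψ, Pi.sup_apply, Pi.add_apply, id, smul_eq_mul]
  rw [hmax]
  exact (hψc.smul (by norm_num)).sup
    ((convexOn_id convex_univ).add (convexOn_const (1 / 2 * ψ L - L) convex_univ))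

theorem logProfileStep_sub_le (hψ : ∀ s t, s ≤ t → ψ t - ψ s ≤ t - s) (s t : ℝ) (hst : s ≤ t) :
    logProfileStep ψ L t - logProfileStep ψ L s ≤ t - s := by
  rw [logProfileStep_eq_max hψ, logProfileStep_eq_max hψ]
  refine (max_sub_max_le_max _ _ _ _).trans (max_le ?_ ?_) <;> linarith [hψ s t hst]

theorem AffineAtSlope.of_logProfileStep (h : AffineAtSlope (logProfileStep ψ L) s a) :
    (s < L ∧ AffineAtSlope ψ s (2 * a)) ∨ a = 1 := by
  rcases lt_or_ge s L with hs | hs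
  · refine Or.inl ⟨hs, ((h.congr (logProfileStep_eventuallyEq_of_lt hs)).const_mul 2).congr ?_⟩
    exact Eventually.of_forall fun t => by ring
  · exact Or.inr <| h.eq_of_eventually_nhdsGE <|
      eventually_nhdsWithin_of_forall fun t ht => logProfileStep_of_le (hs.trans ht)

theorem not_affineAt_logProfileStep (hψ : ∀ s t, s ≤ t → ψ t - ψ s ≤ t - s) :
    ¬ AffineAt (logProfileStep ψ L) L := by
  intro h
  obtain ⟨a, ha⟩ := affineAt_iff_exists_affineAtSlope.1 h
  have ha1 : a = 1 := ha.eq_of_eventually_nhdsGE <|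
    eventually_nhdsWithin_of_forall fun t ht => logProfileStep_of_le ht
  subst ha1
  obtain ⟨b, hb⟩ := affineAtSlope_iff_eventually.1 ha
  have hbL : logProfileStep ψ L L = 1 * L + b := hb.self_of_nhds
  rw [logProfileStep_of_le le_rfl] at hbL
  obtain ⟨t, hbt, htL⟩ :=
    ((hb.filter_mono (nhdsWithin_le_nhds (s := Iio L))).and self_mem_nhdsWithin).exists
  rw [logProfileStep, if_pos (le_of_lt htL)] at hbt
  -- slope `1` of `ψ / 2` just left of `L` would force `ψ L - ψ t = 2 (L - t)`
  linarith [hψ t L (le_of_lt htL), show t < L from htL]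

theorem affineAt_logProfileStep_iff (hψ : ∀ s t, s ≤ t → ψ t - ψ s ≤ t - s) :
    AffineAt (logProfileStep ψ L) s ↔ (s < L ∧ AffineAt ψ s) ∨ L < s := by
  rcases lt_trichotomy s L with hs | rfl | hs
  · rw [affineAt_congr (logProfileStep_eventuallyEq_of_lt hs),
      affineAt_const_mul_iff (by norm_num)]
    simp [hs, hs.not_gt]
  · simp [not_affineAt_logProfileStep hψ]
  · refine iff_of_true (affineAt_iff_exists_affineAtSlope.2 ⟨1, ?_⟩) (Or.inr hs)
    exact affineAtSlope_iff_eventually.2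
      ⟨_, eventually_of_mem (Ioi_mem_nhds hs) fun t ht => logProfileStep_of_le (le_of_lt ht)⟩

end Step

structure IsLogProfile (L : ℕ → ℝ) (n : ℕ) (f : ℝ → ℝ) : Prop where
  monotone : Monotone f
  convexOn : ConvexOn ℝ univ f
  sub_le : ∀ s t, s ≤ t → f t - f s ≤ t - s
  slope_mem : ∀ s a, AffineAtSlope f s a → a = 0 ∨ ∃ k < n, a = (2:ℝ)⁻¹ ^ k
  affineAt_iff : ∀ s, AffineAt f s ↔ ¬ ∃ i, 1 ≤ i ∧ i ≤ n ∧ s = L i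

theorem isLogProfile_const (L : ℕ → ℝ) (c : ℝ) : IsLogProfile L 0 fun _ => c where
  monotone := monotone_const
  convexOn := convexOn_const c convex_univ
  sub_le _ _ hst := by linarith
  slope_mem _ _ h := Or.inl <| h.eq_of_eventually_nhdsGE (b' := c) <|
    Eventually.of_forall fun t => by ring
  affineAt_iff _ := iff_of_true ⟨1, one_pos, 0, c, fun t _ => by ring⟩ (by omega)

theorem IsLogProfile.logProfileStep {L : ℕ → ℝ} {n : ℕ} {f : ℝ → ℝ} (hf : IsLogProfile L n f)
    (hL : ∀ i, 1 ≤ i → i ≤ n → L i < L (n + 1)) :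
    IsLogProfile L (n + 1) (logProfileStep f (L (n + 1))) where
  monotone := monotone_logProfileStep hf.sub_le hf.monotone
  convexOn := convexOn_logProfileStep hf.sub_le hf.convexOn
  sub_le := logProfileStep_sub_le hf.sub_le
  slope_mem s a h := by
    rcases h.of_logProfileStep with ⟨-, hf2⟩ | rfl
    · rcases hf.slope_mem s _ hf2 with h0 | ⟨k, hk, hak⟩
      · exact Or.inl (by linarith)
      · exact Or.inr ⟨k + 1, by omega, by rw [pow_succ, ← hak]; ring⟩
    · exact Or.inr ⟨0, by omega, (pow_zero _).symm⟩
  affineAt_iff s := by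
    rw [affineAt_logProfileStep_iff hf.sub_le, hf.affineAt_iff]
    constructor
    · rintro (⟨hs, hne⟩ | hs) ⟨i, hi1, hin, rfl⟩
      · rcases Nat.lt_or_eq_of_le hin with hin | rfl
        · exact hne ⟨i, hi1, by omega, rfl⟩
        · exact lt_irrefl _ hs
      · rcases Nat.lt_or_eq_of_le hin with hin | rfl
        · exact lt_asymm hs (hL i hi1 (by omega))
        · exact lt_irrefl _ hs
    · intro hne
      rcases lt_trichotomy s (L (n + 1)) with hs | hs | hs
      · exact Or.inl ⟨hs, fun ⟨i, hi1, hin, hi⟩ => hne ⟨i, hi1, by omega, hi⟩⟩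
      · exact absurd ⟨n + 1, by omega, le_rfl, hs⟩ hne
      · exact Or.inr hs

/-- the recursively defined logarithmic profiles
`φ₁(s) = max(s, log r₁)`, `φ_m = (1/2)φ_{m−1}` below `log r_m` and affine of slope `1`
above, are convex, nondecreasing, piecewise affine with slopes in
`{0, 2^{-(m-1)}, …, 1/2, 1}`, and fail to be locally affine exactly at
`{log r₁, …, log r_m}`. -/
theorem stmt16 (r : ℕ → ℝ) (hr1 : 0 < r 1)
    (hrmono : ∀ i j : ℕ, 1 ≤ i → i < j → r i < r j)
    (φ : ℕ → ℝ → ℝ)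
    (hφ1 : ∀ s : ℝ, φ 1 s = max s (Real.log (r 1)))
    (hφm : ∀ m : ℕ, 2 ≤ m → ∀ s : ℝ,
      φ m s = if s ≤ Real.log (r m) then (1 / 2) * φ (m - 1) s
        else s + (1 / 2) * φ (m - 1) (Real.log (r m)) - Real.log (r m)) :
    ∀ m : ℕ, 1 ≤ m →
      ConvexOn ℝ Set.univ (φ m) ∧ Monotone (φ m) ∧
        (∀ s a : ℝ, AffineAtSlope (φ m) s a →
          a = 0 ∨ ∃ k : ℕ, k ≤ m - 1 ∧ a = (2:ℝ)⁻¹ ^ k) ∧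
        (∀ s : ℝ, AffineAt (φ m) s ↔
          ¬ ∃ i : ℕ, 1 ≤ i ∧ i ≤ m ∧ s = Real.log (r i)) := by
  have hlog : ∀ i j, 1 ≤ i → i < j → Real.log (r i) < Real.log (r j) := by
    intro i j hi hij
    have hri : 0 < r i := by
      rcases hi.eq_or_lt with rfl | h
      exacts [hr1, hr1.trans (hrmono 1 i le_rfl h)]
    exact Real.log_lt_log hri (hrmono i j hi hij)
  have hprofile : ∀ m, 1 ≤ m → IsLogProfile (fun i => Real.log (r i)) m (φ m) := by
    intro m hm
    induction m, hm using Nat.le_induction with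
    | base =>
      have hφ1' : φ 1 = logProfileStep (fun _ => 2 * Real.log (r 1)) (Real.log (r 1)) := by
        funext s
        rw [hφ1, logProfileStep]
        split_ifs with hs
        · rw [max_eq_right hs]
          ring
        · rw [max_eq_left (le_of_not_ge hs)]
          ring
      rw [hφ1']
      exact (isLogProfile_const _ _).logProfileStep fun i hi hi0 => by omega
    | succ n hn ih =>
      rw [show φ (n + 1) = logProfileStep (φ n) (Real.log (r (n + 1))) from
        funext (hφm (n + 1) (by omega))]
      exact ih.logProfileStep fun i hi hin => hlog i (n + 1) hi (by omega)
  intro m hm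
  have h := hprofile m hm
  refine ⟨h.convexOn, h.monotone, fun s a ha => ?_, h.affineAt_iff⟩
  exact (h.slope_mem s a ha).imp_right fun ⟨k, hk, hak⟩ => ⟨k, by omega, hak⟩

end
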